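/- For θ > max(1 - d/2, 0), n ≥ 0, k ≥ 0 and any degree-n solid harmonic Y, the Müntz-type generalized Hermite function Ĥ(x) = L_k^{(β_n)}(|x|^{2θ}) e^{-|x|^{2θ}/2} Y(x), with β_n = (n + d/2 - 1)/θ, satisfies the generalized eigenvalue identity (-Δ + θ² |x|^{4θ-2}) Ĥ(x) = 2θ² (β_n + 2k + 1) |x|^{2θ-2} Ĥ(x) for x ≠ 0. -/

import Mathlib

open MeasureTheory Real

/-- Generalized Laguerre polynomial `L_k^{(α)}(z) = ∑_{j=0}^k (α+j+1)_{k-j}/((k-j)! j!) (-z)^j`. -/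
noncomputable def laguerre (α : ℝ) (k : ℕ) (z : ℝ) : ℝ :=
  ∑ j ∈ Finset.range (k + 1),
    Real.Gamma (α + k + 1) /
      (Real.Gamma (α + j + 1) * ((k - j).factorial : ℝ) * (j.factorial : ℝ)) * (-z) ^ j

/-- The Laplacian of `f : ℝ^d → ℝ`, as the trace of the second derivative. -/
noncomputable def lap {d : ℕ} (f : EuclideanSpace ℝ (Fin d) → ℝ)
    (x : EuclideanSpace ℝ (Fin d)) : ℝ :=
  ∑ i : Fin d, iteratedFDeriv ℝ 2 f x ![EuclideanSpace.single i 1, EuclideanSpace.single i 1]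

/-- Evaluation of a multivariate polynomial as a function on `ℝ^d`. -/
noncomputable def pEval {d : ℕ} (P : MvPolynomial (Fin d) ℝ)
    (x : EuclideanSpace ℝ (Fin d)) : ℝ :=
  MvPolynomial.eval (fun i => x i) P

/-!
Write `Ĥ(y) = u(‖y‖²) P(y)` with `u(s) = V(s^θ)` and `V(z) = L_k^{(β)}(z) e^{-z/2}`. For `P`
harmonic and homogeneous of degree `n`, the product rule and Euler's identity `⟪x, ∇P⟫ = n P` give
`Δ Ĥ = (4 s u'' + (2d + 4n) u') P` at `s = ‖x‖²`. As `2d + 4n = 4 (βθ + 1)`, the substitution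
`z = s^θ` turns `4 s u'' + (2d + 4n) u'` into `4 θ² s^{θ-1} (z V'' + (β + 1) V')`, and Laguerre's
equation makes this `θ² s^{θ-1} (z - 2 (β + 2k + 1)) V`. The hypothesis `θ > 1 - d/2` is `β > -1`,
which keeps the Gamma factors of the Laguerre coefficients away from their poles.
-/

open Filter Topology

section Laplacian

variable {d : ℕ}

theorem lap_eq_sum_fderiv_fderiv (f : EuclideanSpace ℝ (Fin d) → ℝ) (x : EuclideanSpace ℝ (Fin d)) :
    lap f x = ∑ i : Fin d,
      fderiv ℝ (fderiv ℝ f) x (EuclideanSpace.single i 1) (EuclideanSpace.single i 1) := by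
  simp only [lap, iteratedFDeriv_two_apply, Matrix.cons_val_zero, Matrix.cons_val_one]

theorem sum_mul_apply_single (x : EuclideanSpace ℝ (Fin d))
    (L : EuclideanSpace ℝ (Fin d) →L[ℝ] ℝ) :
    ∑ i : Fin d, x i * L (EuclideanSpace.single i 1) = L x := by
  conv_rhs => rw [← (EuclideanSpace.basisFun (Fin d) ℝ).sum_repr' x]
  simp [EuclideanSpace.inner_single_left]

theorem ContDiffAt.lap_mul {f g : EuclideanSpace ℝ (Fin d) → ℝ} {x : EuclideanSpace ℝ (Fin d)}
    (hf : ContDiffAt ℝ 2 f x) (hg : ContDiffAt ℝ 2 g x) :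
    lap (fun y => f y * g y) x = f x * lap g x +
      2 * ∑ i : Fin d, fderiv ℝ f x (EuclideanSpace.single i 1) *
        fderiv ℝ g x (EuclideanSpace.single i 1) + g x * lap f x := by
  have hfg : fderiv ℝ (fun y => f y * g y) =ᶠ[𝓝 x]
      fun y => f y • fderiv ℝ g y + g y • fderiv ℝ f y := by
    filter_upwards [hf.eventually (by simp), hg.eventually (by simp)] with y hfy hgy
    exact fderiv_mul (hfy.differentiableAt two_ne_zero) (hgy.differentiableAt two_ne_zero)
  have hf' := (hf.fderiv_right (m := 1) le_rfl).differentiableAt one_ne_zero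
  have hg' := (hg.fderiv_right (m := 1) le_rfl).differentiableAt one_ne_zero
  have h : HasFDerivAt (fun y => f y • fderiv ℝ g y + g y • fderiv ℝ f y) _ x :=
    ((hf.differentiableAt two_ne_zero).hasFDerivAt.smul hg'.hasFDerivAt).add
      ((hg.differentiableAt two_ne_zero).hasFDerivAt.smul hf'.hasFDerivAt)
  simp only [lap_eq_sum_fderiv_fderiv, hfg.fderiv_eq, h.fderiv]
  simp only [add_apply, smul_apply, ContinuousLinearMap.smulRight_apply, smul_eq_mul,
    mul_comm (fderiv ℝ g x _), Finset.sum_add_distrib, ← Finset.mul_sum]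
  ring

theorem ContDiffAt.lap_comp {u : ℝ → ℝ} {g : EuclideanSpace ℝ (Fin d) → ℝ}
    {x : EuclideanSpace ℝ (Fin d)} (hu : ContDiffAt ℝ 2 u (g x)) (hg : ContDiffAt ℝ 2 g x) :
    lap (fun y => u (g y)) x = deriv (deriv u) (g x) *
      ∑ i : Fin d, fderiv ℝ g x (EuclideanSpace.single i 1) ^ 2 + deriv u (g x) * lap g x := by
  have hug : fderiv ℝ (fun y => u (g y)) =ᶠ[𝓝 x] fun y => deriv u (g y) • fderiv ℝ g y := by
    filter_upwards [hg.continuousAt.tendsto.eventually (hu.eventually (by simp)),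
      hg.eventually (by simp)] with y huy hgy
    exact ((huy.differentiableAt two_ne_zero).hasDerivAt.comp_hasFDerivAt y
      (hgy.differentiableAt two_ne_zero).hasFDerivAt).fderiv
  have hu' := (hu.derivWithin (m := 1) le_rfl).differentiableAt one_ne_zero
  have hg' := (hg.fderiv_right (m := 1) le_rfl).differentiableAt one_ne_zero
  have h : HasFDerivAt (fun y => deriv u (g y) • fderiv ℝ g y) _ x :=
    (hu'.hasDerivAt.comp_hasFDerivAt x (hg.differentiableAt two_ne_zero).hasFDerivAt).smul
      hg'.hasFDerivAt
  simp only [lap_eq_sum_fderiv_fderiv, hug.fderiv_eq, h.fderiv]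
  simp [Finset.sum_add_distrib, ← Finset.mul_sum, sq, mul_assoc, add_comm]

theorem fderiv_fderiv_norm_sq_apply {E : Type*} [NormedAddCommGroup E] [InnerProductSpace ℝ E]
    (x a b : E) : fderiv ℝ (fderiv ℝ fun y : E => ‖y‖ ^ 2) x a b = 2 * inner ℝ a b := by
  have h : HasFDerivAt (fderiv ℝ fun y : E => ‖y‖ ^ 2) (2 • innerSL ℝ (E := E)) x := by
    rw [fderiv_norm_sq]
    exact (2 • innerSL ℝ (E := E)).hasFDerivAt
  rw [h.fderiv, smul_apply, smul_apply, innerSL_apply_apply, nsmul_eq_mul, Nat.cast_ofNat]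

theorem lap_norm_sq (x : EuclideanSpace ℝ (Fin d)) : lap (fun y => ‖y‖ ^ 2) x = 2 * d := by
  simp [lap_eq_sum_fderiv_fderiv, fderiv_fderiv_norm_sq_apply, mul_comm]

theorem sum_fderiv_norm_sq_apply_single_sq (x : EuclideanSpace ℝ (Fin d)) :
    ∑ i : Fin d, fderiv ℝ (fun y => ‖y‖ ^ 2) x (EuclideanSpace.single i 1) ^ 2 = 4 * ‖x‖ ^ 2 := by
  simp only [fderiv_norm_sq_apply, smul_apply, coe_innerSL_apply, EuclideanSpace.inner_single_right,
    ringHom_apply, one_mul, nsmul_eq_mul, mul_pow, ← Finset.mul_sum]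
  rw [EuclideanSpace.real_norm_sq_eq]
  norm_num

theorem ContDiffAt.lap_comp_norm_sq {u : ℝ → ℝ} {x : EuclideanSpace ℝ (Fin d)}
    (hu : ContDiffAt ℝ 2 u (‖x‖ ^ 2)) :
    lap (fun y => u (‖y‖ ^ 2)) x =
      4 * ‖x‖ ^ 2 * deriv (deriv u) (‖x‖ ^ 2) + 2 * d * deriv u (‖x‖ ^ 2) := by
  rw [hu.lap_comp (contDiff_norm_sq ℝ).contDiffAt, sum_fderiv_norm_sq_apply_single_sq, lap_norm_sq]
  ring

theorem contDiff_pEval (P : MvPolynomial (Fin d) ℝ) {m : WithTop ℕ∞} :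
    ContDiff ℝ m (pEval P) := by
  unfold pEval
  induction P using MvPolynomial.induction_on with
  | C a => simpa using contDiff_const
  | add p q hp hq => simpa using hp.add hq
  | mul_X p i hp => simpa using hp.mul (EuclideanSpace.proj i).contDiff

theorem MvPolynomial.IsHomogeneous.pEval_smul {n : ℕ} {P : MvPolynomial (Fin d) ℝ}
    (hP : P.IsHomogeneous n) (t : ℝ) (x : EuclideanSpace ℝ (Fin d)) :
    pEval P (t • x) = t ^ n * pEval P x := by
  simp only [pEval, MvPolynomial.eval_eq, Finset.mul_sum]
  refine Finset.sum_congr rfl fun m hm => ?_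
  simp only [PiLp.smul_apply, smul_eq_mul, mul_pow, Finset.prod_mul_distrib,
    Finset.prod_pow_eq_pow_sum, ← hP.degree_eq_sum_deg_support hm]
  ring

theorem fderiv_apply_self_of_homogeneous {E F : Type*} [NormedAddCommGroup E] [NormedSpace ℝ E]
    [NormedAddCommGroup F] [NormedSpace ℝ F] {f : E → F} {x : E} {n : ℕ}
    (hf : DifferentiableAt ℝ f x) (hhom : ∀ t : ℝ, f (t • x) = t ^ n • f x) :
    fderiv ℝ f x x = (n : ℝ) • f x := by
  have hline : HasDerivAt (fun t : ℝ => f (t • x)) (fderiv ℝ f x x) 1 := by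
    have hf' : HasFDerivAt f (fderiv ℝ f x) ((1 : ℝ) • x) := by
      rw [one_smul]
      exact hf.hasFDerivAt
    exact hf'.comp_hasDerivAt 1 (by simpa using (hasDerivAt_id (1 : ℝ)).smul_const x)
  have hpow : HasDerivAt (fun t : ℝ => t ^ n • f x) ((n : ℝ) • f x) 1 := by
    simpa using (hasDerivAt_pow n (1 : ℝ)).smul_const (f x)
  exact hline.unique (by simpa only [hhom] using hpow)

theorem ContDiffAt.lap_comp_norm_sq_mul_pEval {n : ℕ} {u : ℝ → ℝ} {P : MvPolynomial (Fin d) ℝ}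
    {x : EuclideanSpace ℝ (Fin d)} (hu : ContDiffAt ℝ 2 u (‖x‖ ^ 2)) (hP : P.IsHomogeneous n)
    (hharm : lap (pEval P) x = 0) :
    lap (fun y => u (‖y‖ ^ 2) * pEval P y) x =
      (4 * ‖x‖ ^ 2 * deriv (deriv u) (‖x‖ ^ 2) + (2 * d + 4 * n) * deriv u (‖x‖ ^ 2)) *
        pEval P x := by
  have hN : ContDiffAt ℝ 2 (fun y : EuclideanSpace ℝ (Fin d) => ‖y‖ ^ 2) x :=
    (contDiff_norm_sq ℝ).contDiffAt
  have hfx : fderiv ℝ (fun y => u (‖y‖ ^ 2)) x =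
      deriv u (‖x‖ ^ 2) • fderiv ℝ (fun y => ‖y‖ ^ 2) x :=
    ((hu.differentiableAt two_ne_zero).hasDerivAt.comp_hasFDerivAt x
      (hN.differentiableAt two_ne_zero).hasFDerivAt).fderiv
  have heuler : fderiv ℝ (pEval P) x x = n * pEval P x :=
    fderiv_apply_self_of_homogeneous ((contDiff_pEval P).differentiable one_ne_zero x)
      fun t => by rw [hP.pEval_smul, smul_eq_mul]
  have hcross : ∑ i : Fin d, fderiv ℝ (fun y => u (‖y‖ ^ 2)) x (EuclideanSpace.single i 1) *
      fderiv ℝ (pEval P) x (EuclideanSpace.single i 1) =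
        2 * deriv u (‖x‖ ^ 2) * (n * pEval P x) := by
    rw [← heuler, ← sum_mul_apply_single, Finset.mul_sum]
    refine Finset.sum_congr rfl fun i _ => ?_
    simp only [hfx, fderiv_norm_sq_apply, smul_apply, coe_innerSL_apply,
      EuclideanSpace.inner_single_right, ringHom_apply, one_mul, nsmul_eq_mul, smul_eq_mul]
    ring
  have hf : ContDiffAt ℝ 2 (fun y => u (‖y‖ ^ 2)) x := hu.comp x hN
  rw [hf.lap_mul (contDiff_pEval P).contDiffAt, hu.lap_comp_norm_sq, hharm, hcross]
  ring

end Laplacian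

section Laguerre

variable (α : ℝ) (k : ℕ)

noncomputable def laguerreCoeff (j : ℕ) : ℝ :=
  Real.Gamma (α + k + 1) /
    (Real.Gamma (α + j + 1) * ((k - j).factorial : ℝ) * (j.factorial : ℝ))

theorem laguerre_eq_sum (z : ℝ) :
    laguerre α k z = ∑ j ∈ Finset.range (k + 1), laguerreCoeff α k j * (-z) ^ j := rfl

theorem laguerreCoeff_succ_mul (hα : -1 < α) {i : ℕ} (hik : i < k) :
    laguerreCoeff α k (i + 1) * (i + 1) * (i + 1 + α) = laguerreCoeff α k i * (k - i) := by
  have hpos : 0 < α + i + 1 := by linarith [(Nat.cast_nonneg i : (0 : ℝ) ≤ i)]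
  have hΓ : Real.Gamma (α + ↑(i + 1) + 1) = (α + i + 1) * Real.Gamma (α + i + 1) := by
    rw [Nat.cast_succ, ← Real.Gamma_add_one hpos.ne']
    ring_nf
  have hfac : ((k - i).factorial : ℝ) = (k - i) * (k - (i + 1)).factorial := by
    rw [show k - i = k - (i + 1) + 1 by omega, Nat.factorial_succ, Nat.cast_mul,
      show k - (i + 1) + 1 = k - i by omega, Nat.cast_sub hik.le]
  have hki : (k : ℝ) - i ≠ 0 := sub_ne_zero.2 (by exact_mod_cast hik.ne')
  unfold laguerreCoeff
  rw [hΓ, hfac, Nat.factorial_succ]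
  field_simp [(Real.Gamma_pos_of_pos hpos).ne']
  push_cast
  ring

theorem hasDerivAt_laguerre (z : ℝ) :
    HasDerivAt (laguerre α k)
      (∑ j ∈ Finset.range (k + 1), laguerreCoeff α k j * (-(j : ℝ)) * (-z) ^ (j - 1)) z := by
  refine HasDerivAt.fun_sum fun j _ => ?_
  refine (((hasDerivAt_neg z).pow j).const_mul (laguerreCoeff α k j)).congr_deriv ?_
  ring

theorem deriv_laguerre :
    deriv (laguerre α k) = fun z =>
      ∑ j ∈ Finset.range (k + 1), laguerreCoeff α k j * (-(j : ℝ)) * (-z) ^ (j - 1) :=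
  funext fun z => (hasDerivAt_laguerre α k z).deriv

theorem deriv_deriv_laguerre :
    deriv (deriv (laguerre α k)) = fun z =>
      ∑ j ∈ Finset.range (k + 1), laguerreCoeff α k j * j * (j - 1 : ℕ) * (-z) ^ (j - 2) := by
  funext z
  rw [deriv_laguerre]
  refine (HasDerivAt.fun_sum fun j _ => ?_).deriv
  refine (((hasDerivAt_neg z).pow (j - 1)).const_mul
    (laguerreCoeff α k j * (-(j : ℝ)))).congr_deriv ?_
  rw [Nat.sub_sub]
  ring

theorem contDiff_laguerre {m : WithTop ℕ∞} : ContDiff ℝ m (laguerre α k) := by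
  unfold laguerre
  fun_prop

theorem laguerre_ode (hα : -1 < α) (z : ℝ) :
    z * deriv (deriv (laguerre α k)) z + (α + 1 - z) * deriv (laguerre α k) z +
      k * laguerre α k z = 0 := by
  set c := laguerreCoeff α k
  have hterm : ∀ j ∈ Finset.range (k + 1),
      z * (c j * j * (j - 1 : ℕ) * (-z) ^ (j - 2)) +
          (α + 1 - z) * (c j * (-(j : ℝ)) * (-z) ^ (j - 1)) + k * (c j * (-z) ^ j) =
        c j * (k - j) * (-z) ^ j - c j * j * (j + α) * (-z) ^ (j - 1) := by
    intro j _
    rcases j with _ | _ | j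
    · simp [mul_comm]
    · simp only [Nat.sub_self, pow_zero]
      ring
    · simp only [show j + 2 - 1 = j + 1 by omega, pow_succ]
      push_cast
      ring
  -- After shifting the index of the second sum, the two sums cancel termwise by the recurrence.
  rw [deriv_deriv_laguerre, deriv_laguerre, laguerre_eq_sum, Finset.mul_sum, Finset.mul_sum,
    Finset.mul_sum, ← Finset.sum_add_distrib, ← Finset.sum_add_distrib, Finset.sum_congr rfl hterm,
    Finset.sum_sub_distrib, Finset.sum_range_succ, Finset.sum_range_succ', sub_eq_zero]
  simp only [Nat.cast_zero, mul_zero, zero_mul, sub_self, add_zero, Nat.add_sub_cancel]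
  refine Finset.sum_congr rfl fun i hi => ?_
  rw [← laguerreCoeff_succ_mul α k hα (Finset.mem_range.1 hi)]
  push_cast
  ring

noncomputable def laguerreFn (z : ℝ) : ℝ := laguerre α k z * exp (-z / 2)

theorem contDiff_laguerreFn {m : WithTop ℕ∞} : ContDiff ℝ m (laguerreFn α k) := by
  unfold laguerreFn
  have := contDiff_laguerre α k (m := m)
  fun_prop

theorem hasDerivAt_exp_neg_half (z : ℝ) :
    HasDerivAt (fun z => exp (-z / 2)) (-exp (-z / 2) / 2) z := by
  refine ((hasDerivAt_neg z).div_const 2).exp.congr_deriv ?_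
  ring

theorem deriv_laguerreFn :
    deriv (laguerreFn α k) = fun z =>
      (deriv (laguerre α k) z - laguerre α k z / 2) * exp (-z / 2) := by
  funext z
  refine (((contDiff_laguerre α k (m := 1)).differentiable one_ne_zero z).hasDerivAt.mul
    (hasDerivAt_exp_neg_half z)).deriv.trans ?_
  ring

theorem deriv_deriv_laguerreFn :
    deriv (deriv (laguerreFn α k)) = fun z =>
      (deriv (deriv (laguerre α k)) z - deriv (laguerre α k) z + laguerre α k z / 4) *
        exp (-z / 2) := by
  funext z
  have hL := (contDiff_laguerre α k (m := 1)).differentiable one_ne_zero z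
  have hL' := (contDiff_laguerre α k (m := 2)).differentiable_deriv_two z
  rw [deriv_laguerreFn]
  refine (((hL'.hasDerivAt.sub (hL.hasDerivAt.div_const 2)).mul
    (hasDerivAt_exp_neg_half z))).deriv.trans ?_
  simp only [Pi.sub_apply]
  ring

theorem laguerreFn_ode (hα : -1 < α) (z : ℝ) :
    z * deriv (deriv (laguerreFn α k)) z + (α + 1) * deriv (laguerreFn α k) z +
      ((α + 2 * k + 1) / 2 - z / 4) * laguerreFn α k z = 0 := by
  rw [deriv_deriv_laguerreFn, deriv_laguerreFn, laguerreFn]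
  linear_combination exp (-z / 2) * laguerre_ode α k hα z

end Laguerre

section RpowComp

variable {V : ℝ → ℝ} (θ : ℝ) {s : ℝ}

theorem deriv_comp_rpow (hV : Differentiable ℝ V) (hs : 0 < s) :
    deriv (fun t => V (t ^ θ)) s = θ * s ^ (θ - 1) * deriv V (s ^ θ) := by
  refine ((hV _).hasDerivAt.comp s (hasDerivAt_rpow_const (Or.inl hs.ne'))).deriv.trans ?_
  ring

theorem deriv_deriv_comp_rpow (hV : ContDiff ℝ 2 V) (hs : 0 < s) :
    deriv (deriv fun t => V (t ^ θ)) s =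
      θ * (θ - 1) * s ^ (θ - 2) * deriv V (s ^ θ) +
        θ ^ 2 * s ^ (2 * θ - 2) * deriv (deriv V) (s ^ θ) := by
  have hV1 : Differentiable ℝ V := hV.differentiable two_ne_zero
  have hderiv : deriv (fun t => V (t ^ θ)) =ᶠ[𝓝 s] fun t => θ * t ^ (θ - 1) * deriv V (t ^ θ) := by
    filter_upwards [Ioi_mem_nhds hs] with t ht using deriv_comp_rpow θ hV1 ht
  have h : HasDerivAt (fun t => θ * t ^ (θ - 1) * deriv V (t ^ θ)) _ s :=
    ((hasDerivAt_rpow_const (p := θ - 1) (Or.inl hs.ne')).const_mul θ).mul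
      ((hV.differentiable_deriv_two _).hasDerivAt.comp s
        (hasDerivAt_rpow_const (p := θ) (Or.inl hs.ne')))
  rw [hderiv.deriv_eq, h.deriv, show θ - 1 - 1 = θ - 2 by ring,
    show 2 * θ - 2 = (θ - 1) + (θ - 1) by ring, rpow_add hs]
  ring

end RpowComp

theorem laguerreFn_comp_rpow_ode (α : ℝ) (k : ℕ) (hα : -1 < α) (θ : ℝ) {s : ℝ} (hs : 0 < s) :
    4 * s * deriv (deriv fun t => laguerreFn α k (t ^ θ)) s +
        4 * (α * θ + 1) * deriv (fun t => laguerreFn α k (t ^ θ)) s =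
      θ ^ 2 * s ^ (θ - 1) * (s ^ θ - 2 * (α + 2 * k + 1)) * laguerreFn α k (s ^ θ) := by
  rw [deriv_deriv_comp_rpow θ (contDiff_laguerreFn α k) hs,
    deriv_comp_rpow θ ((contDiff_laguerreFn α k (m := 1)).differentiable one_ne_zero) hs]
  have h1 : s * s ^ (θ - 2) = s ^ (θ - 1) := by
    rw [show θ - 1 = 1 + (θ - 2) by ring, rpow_add hs, rpow_one]
  have h2 : s * s ^ (2 * θ - 2) = s ^ (θ - 1) * s ^ θ := by
    rw [← rpow_add hs, show θ - 1 + θ = 1 + (2 * θ - 2) by ring, rpow_add hs, rpow_one]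
  linear_combination 4 * θ * (θ - 1) * deriv (laguerreFn α k) (s ^ θ) * h1 +
    4 * θ ^ 2 * deriv (deriv (laguerreFn α k)) (s ^ θ) * h2 +
    4 * θ ^ 2 * s ^ (θ - 1) * laguerreFn_ode α k hα (s ^ θ)

theorem muntz_ghf_generalized_eigen_general (d : ℕ) (θ : ℝ)
    (hθ : θ > max (1 - (d : ℝ) / 2) 0) (n k : ℕ)
    (P : MvPolynomial (Fin d) ℝ) (hhom : P.IsHomogeneous n)
    (hharm : ∀ x, lap (pEval P) x = 0) (x : EuclideanSpace ℝ (Fin d)) (hx : x ≠ 0) :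
    -(lap (fun y => laguerre (((n : ℝ) + (d : ℝ) / 2 - 1) / θ) k (‖y‖ ^ (2 * θ)) *
          Real.exp (-‖y‖ ^ (2 * θ) / 2) * pEval P y) x) +
        θ ^ 2 * ‖x‖ ^ (4 * θ - 2) *
          (laguerre (((n : ℝ) + (d : ℝ) / 2 - 1) / θ) k (‖x‖ ^ (2 * θ)) *
            Real.exp (-‖x‖ ^ (2 * θ) / 2) * pEval P x)
      = 2 * θ ^ 2 * (((n : ℝ) + (d : ℝ) / 2 - 1) / θ + 2 * k + 1) * ‖x‖ ^ (2 * θ - 2) *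
          (laguerre (((n : ℝ) + (d : ℝ) / 2 - 1) / θ) k (‖x‖ ^ (2 * θ)) *
            Real.exp (-‖x‖ ^ (2 * θ) / 2) * pEval P x) := by
  obtain ⟨hθd, hθ0⟩ := max_lt_iff.1 hθ
  set β := ((n : ℝ) + d / 2 - 1) / θ with hβ_def
  have hβθ : β * θ = n + d / 2 - 1 := div_mul_cancel₀ _ hθ0.ne'
  have hβ : -1 < β := by
    rw [hβ_def, lt_div_iff₀ hθ0]
    linarith [(n.cast_nonneg : (0 : ℝ) ≤ n)]
  have hs : 0 < ‖x‖ ^ 2 := pow_pos (norm_pos_iff.2 hx) 2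
  have hnorm_rpow (y : EuclideanSpace ℝ (Fin d)) (a : ℝ) : ‖y‖ ^ (2 * a) = (‖y‖ ^ 2) ^ a := by
    rw [rpow_mul (norm_nonneg y), rpow_two]
  have hH : (fun y => laguerre β k (‖y‖ ^ (2 * θ)) * exp (-‖y‖ ^ (2 * θ) / 2) * pEval P y) =
      fun y => laguerreFn β k ((‖y‖ ^ 2) ^ θ) * pEval P y := by
    funext y
    rw [hnorm_rpow, laguerreFn]
  have hu : ContDiffAt ℝ 2 (fun s => laguerreFn β k (s ^ θ)) (‖x‖ ^ 2) :=
    (contDiff_laguerreFn β k).contDiffAt.comp _ (contDiffAt_rpow_const_of_ne hs.ne')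
  have hpow₁ : ‖x‖ ^ (4 * θ - 2) = (‖x‖ ^ 2) ^ (θ - 1) * (‖x‖ ^ 2) ^ θ := by
    rw [← rpow_add hs, ← hnorm_rpow]
    ring_nf
  have hpow₂ : ‖x‖ ^ (2 * θ - 2) = (‖x‖ ^ 2) ^ (θ - 1) := by
    rw [← hnorm_rpow]
    ring_nf
  rw [congrFun hH x, hH, hu.lap_comp_norm_sq_mul_pEval hhom (hharm x), hpow₁, hpow₂]
  linear_combination (-pEval P x) * laguerreFn_comp_rpow_ode β k hβ θ hs +
    4 * deriv (fun s => laguerreFn β k (s ^ θ)) (‖x‖ ^ 2) * pEval P x * hβθ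

theorem muntz_ghf_generalized_eigen (d : ℕ) (hd : 1 ≤ d) (θ : ℝ)
    (hθ : θ > max (1 - (d : ℝ) / 2) 0) (n k : ℕ)
    (P : MvPolynomial (Fin d) ℝ) (hhom : P.IsHomogeneous n)
    (hharm : ∀ x, lap (pEval P) x = 0) (x : EuclideanSpace ℝ (Fin d)) (hx : x ≠ 0) :
    -(lap (fun y => laguerre (((n : ℝ) + (d : ℝ) / 2 - 1) / θ) k (‖y‖ ^ (2 * θ)) *
          Real.exp (-‖y‖ ^ (2 * θ) / 2) * pEval P y) x) +
        θ ^ 2 * ‖x‖ ^ (4 * θ - 2) *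
          (laguerre (((n : ℝ) + (d : ℝ) / 2 - 1) / θ) k (‖x‖ ^ (2 * θ)) *
            Real.exp (-‖x‖ ^ (2 * θ) / 2) * pEval P x)
      = 2 * θ ^ 2 * (((n : ℝ) + (d : ℝ) / 2 - 1) / θ + 2 * k + 1) * ‖x‖ ^ (2 * θ - 2) *
          (laguerre (((n : ℝ) + (d : ℝ) / 2 - 1) / θ) k (‖x‖ ^ (2 * θ)) *
            Real.exp (-‖x‖ ^ (2 * θ) / 2) * pEval P x) :=
  muntz_ghf_generalized_eigen_general d θ hθ n k P hhom hharm x hx
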